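/- Let g : ℝ → ℝ satisfy, for all t ≠ x, g'(t) = t g(t) + 1_{t ≤ x} − c with c = Φ(x) ∈ [0,1], with convention g'(x) := x g(x) + 1 − c, 0 < g ≤ √(2π)/4, and |(t g(t)) − (s g(s))| ≤ (|r| + √(2π)/4)(|t−r| + |s−r|) for all r,s,t. Then for all w, h ∈ ℝ: |g(w) − g(w−h) − g'(w)h| ≤ (3h²/2)(|w−h| + √(2π)/4) + |h|(1_{[w−h,w)}(x) + 1_{[w,w−h)}(x)). -/

import Mathlib

open Set

lemma integral_abs_zero_to (h : ℝ) : (∫ u in (0:ℝ)..h, |u|) = h * |h| / 2 := by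
  rcases le_or_gt 0 h with hh | hh
  · have : (∫ u in (0:ℝ)..h, |u|) = ∫ u in (0:ℝ)..h, u := by
      apply intervalIntegral.integral_congr
      intro u hu
      rw [uIcc_of_le hh] at hu
      exact abs_of_nonneg hu.1
    rw [this, integral_id, abs_of_nonneg hh]
    ring
  · have : (∫ u in (0:ℝ)..h, |u|) = ∫ u in (0:ℝ)..h, -u := by
      apply intervalIntegral.integral_congr
      intro u hu
      rw [uIcc_of_ge hh.le] at hu
      exact abs_of_nonpos hu.2
    rw [this, intervalIntegral.integral_neg, integral_id, abs_of_neg hh]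
    ring

/-- Bound (g) of Proposition A.1 (backward Taylor bound for the Stein solution):
here `φ t = t g t + 1_{t ≤ x} - c` plays the role of `g'` under the convention
`g'(x) := x g(x) + 1 - c`. -/
theorem stein_solution_taylor_backward (g : ℝ → ℝ) (x c : ℝ)
    (hc0 : 0 ≤ c) (hc1 : c ≤ 1)
    (hpos : ∀ t, 0 < g t)
    (hbound : ∀ t, g t ≤ Real.sqrt (2 * Real.pi) / 4)
    (hstein : ∀ t, t ≠ x →
      HasDerivAt g (t * g t + (if t ≤ x then 1 else 0) - c) t)
    (hcont : Continuous g)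
    (hlip : ∀ r s t : ℝ,
      |t * g t - s * g s| ≤ (|r| + Real.sqrt (2 * Real.pi) / 4) * (|t - r| + |s - r|))
    (w h : ℝ) :
    |g w - g (w - h) - (w * g w + (if w ≤ x then 1 else 0) - c) * h|
      ≤ 3 * h ^ 2 / 2 * (|w - h| + Real.sqrt (2 * Real.pi) / 4)
        + |h| * ((Ico (w - h) w).indicator (fun _ => (1 : ℝ)) x
                  + (Ico w (w - h)).indicator (fun _ => (1 : ℝ)) x) := by
  set S : ℝ := Real.sqrt (2 * Real.pi) / 4 with hS
  set φ : ℝ → ℝ := fun t => t * g t + (if t ≤ x then 1 else 0) - c with hφ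
  set I : ℝ := (Ico (w - h) w).indicator (fun _ => (1 : ℝ)) x
      + (Ico w (w - h)).indicator (fun _ => (1 : ℝ)) x with hI
  have hInn : 0 ≤ I := by
    apply add_nonneg <;> exact Set.indicator_nonneg (fun _ _ => zero_le_one) x
  -- interval integrability of φ
  have hint : IntervalIntegrable φ MeasureTheory.volume (w - h) w := by
    have hc' : Continuous (fun t => t * g t - c) := by fun_prop
    have h1 : IntervalIntegrable (fun t => t * g t - c) MeasureTheory.volume (w - h) w :=
      hc'.intervalIntegrable _ _
    have h2 : IntervalIntegrable ((Iic x).indicator (fun _ => (1 : ℝ)))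
        MeasureTheory.volume (w - h) w := by
      constructor <;>
        exact ((MeasureTheory.integrableOn_const (C := (1:ℝ))
          measure_Ioc_lt_top.ne)).indicator measurableSet_Iic
    have heq : φ = fun t => (t * g t - c) + (Iic x).indicator (fun _ => (1 : ℝ)) t := by
      funext t
      by_cases ht : t ≤ x <;> simp [hφ, Set.indicator_apply, ht] <;> ring
    rw [heq]
    exact h1.add h2
  -- FTC
  have hftc : (∫ t in (w - h)..w, φ t) = g w - g (w - h) := by
    apply MeasureTheory.integral_eq_of_hasDerivAt_off_countable g φ
      (s := {x}) (Set.countable_singleton x) hcont.continuousOn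
      (fun t ht => hstein t (by simpa using ht.2)) hint
  -- key identity
  have hkey : g w - g (w - h) - φ w * h = ∫ t in (w - h)..w, (φ t - φ w) := by
    rw [intervalIntegral.integral_sub hint intervalIntegrable_const,
      hftc, intervalIntegral.integral_const]
    simp only [smul_eq_mul]
    ring
  -- bound function
  set B : ℝ → ℝ := fun t => (|w - h| + S) * |t - (w - h)| + ((|w - h| + S) * |h| + I)
    with hB
  have hBc : Continuous B := by
    rw [hB]; fun_prop
  have hBint : IntervalIntegrable B MeasureTheory.volume (w - h) w :=
    hBc.intervalIntegrable _ _
  -- pointwise bound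
  have hpt : ∀ t ∈ Set.uIoc (w - h) w, |φ t - φ w| ≤ B t := by
    intro t ht
    have hsplit : φ t - φ w = (t * g t - w * g w) +
        ((if t ≤ x then (1:ℝ) else 0) - (if w ≤ x then (1:ℝ) else 0)) := by
      simp only [hφ]; ring
    have h1 : |t * g t - w * g w| ≤ (|w - h| + S) * (|t - (w - h)| + |h|) := by
      have := hlip (w - h) w t
      have hw : |w - (w - h)| = |h| := by congr 1; ring
      rwa [hw] at this
    have h2 : |(if t ≤ x then (1:ℝ) else 0) - (if w ≤ x then (1:ℝ) else 0)| ≤ I := by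
      rw [Set.mem_uIoc] at ht
      by_cases htx : t ≤ x <;> by_cases hwx : w ≤ x
      · simpa [htx, hwx] using hInn
      · -- t ≤ x < w : x ∈ [w-h, w)
        simp only [htx, hwx, if_true, if_false, sub_zero, abs_one]
        push_neg at hwx
        have hxw : x < w := hwx
        have hwh : w - h < t := by
          rcases ht with ⟨h1', _⟩ | ⟨h1', h2'⟩
          · exact h1'
          · exact absurd (lt_of_lt_of_le h1' (htx.trans hxw.le)) (lt_irrefl w)
        have : (Ico (w - h) w).indicator (fun _ => (1 : ℝ)) x = 1 := by
          exact Set.indicator_of_mem (Set.mem_Ico.mpr ⟨hwh.le.trans htx, hxw⟩) _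
        rw [hI, this]
        have := Set.indicator_nonneg (s := Ico w (w - h))
          (f := fun _ => (1:ℝ)) (fun _ _ => zero_le_one) x
        linarith
      · -- w ≤ x < t : x ∈ [w, w-h)
        simp only [htx, hwx, if_false, if_true, zero_sub, abs_neg, abs_one]
        push_neg at htx
        have hxt : x < t := htx
        have hth : t ≤ w - h := by
          rcases ht with ⟨_, h2'⟩ | ⟨_, h2'⟩
          · exact absurd (lt_of_le_of_lt hwx (hxt.trans_le h2')) (lt_irrefl w)
          · exact h2'
        have : (Ico w (w - h)).indicator (fun _ => (1 : ℝ)) x = 1 := by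
          exact Set.indicator_of_mem (Set.mem_Ico.mpr ⟨hwx, lt_of_lt_of_le hxt hth⟩) _
        rw [hI, this]
        have := Set.indicator_nonneg (s := Ico (w - h) w)
          (f := fun _ => (1:ℝ)) (fun _ _ => zero_le_one) x
        linarith
      · simpa [htx, hwx] using hInn
    calc |φ t - φ w| ≤ |t * g t - w * g w| +
          |(if t ≤ x then (1:ℝ) else 0) - (if w ≤ x then (1:ℝ) else 0)| := by
            rw [hsplit]; exact abs_add_le _ _
      _ ≤ (|w - h| + S) * (|t - (w - h)| + |h|) + I := add_le_add h1 h2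
      _ = B t := by rw [hB]; ring
  -- compute the integral of B
  have habs : (∫ t in (w - h)..w, |t - (w - h)|) = h * |h| / 2 := by
    rw [intervalIntegral.integral_comp_sub_right (fun u => |u|) (w - h)]
    have h0 : w - h - (w - h) = 0 := by ring
    have h1 : w - (w - h) = h := by ring
    rw [h0, h1, integral_abs_zero_to]
  have hBval : (∫ t in (w - h)..w, B t) = h * ((|w - h| + S) * (3 * |h| / 2) + I) := by
    rw [hB]
    have hcm : Continuous (fun t : ℝ => (|w - h| + S) * |t - (w - h)|) := by fun_prop
    rw [intervalIntegral.integral_add (hcm.intervalIntegrable _ _)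
      intervalIntegrable_const]
    rw [intervalIntegral.integral_const_mul, habs, intervalIntegral.integral_const]
    simp only [smul_eq_mul]
    ring
  -- conclusion
  have hmain : |∫ t in (w - h)..w, (φ t - φ w)| ≤ |∫ t in (w - h)..w, B t| := by
    have := intervalIntegral.norm_integral_le_abs_of_norm_le
      (μ := MeasureTheory.volume) (f := fun t => φ t - φ w) (a := w - h) (b := w)
      (g := B) ?_ hBint
    · simpa [Real.norm_eq_abs] using this
    · refine Filter.eventually_of_mem
        (MeasureTheory.self_mem_ae_restrict measurableSet_uIoc) ?_
      intro t ht
      simpa [Real.norm_eq_abs] using hpt t ht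
  have hfin : |∫ t in (w - h)..w, B t| = 3 * h ^ 2 / 2 * (|w - h| + S) + |h| * I := by
    rw [hBval, abs_mul]
    have hS0 : 0 ≤ S := by rw [hS]; positivity
    have hK : 0 ≤ (|w - h| + S) * (3 * |h| / 2) + I := by
      have h1 : (0:ℝ) ≤ (|w - h| + S) * (3 * |h| / 2) :=
        mul_nonneg (by positivity) (by positivity)
      linarith
    rw [abs_of_nonneg hK]
    have hsq : |h| * |h| = h ^ 2 := by rw [abs_mul_abs_self, sq]
    have : |h| * ((|w - h| + S) * (3 * |h| / 2) + I)
        = 3 * (|h| * |h|) / 2 * (|w - h| + S) + |h| * I := by ring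
    rw [this, hsq]
  calc |g w - g (w - h) - (w * g w + (if w ≤ x then 1 else 0) - c) * h|
      = |∫ t in (w - h)..w, (φ t - φ w)| := by rw [← hkey]
    _ ≤ |∫ t in (w - h)..w, B t| := hmain
    _ = 3 * h ^ 2 / 2 * (|w - h| + S) + |h| * I := hfin
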